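/- arXiv:0906.4209 — 4 statements merged into one kernel-verified Lean document; each statement's English description precedes it below -/
import Mathlib

section
/- Let p be prime, 1 < t ≤ p, k = √(2p/t), and j = ⌈log₂(p/k)⌉. Define rectangles Π_0 = [1,k]×[1,k], and for ν ≥ 1, Π_ν = [2^{ν-1}k+1, 2^ν k]×[1, k/2^ν] and Π_{-ν} = [1, k/2^ν]×[2^{ν-1}k+1, 2^ν k]. Then every pair of integers (x,y) with 1 ≤ x < p, 1 ≤ y < p, and xy ≤ p/t lies in the union Π^t = ∪_{i=-j}^{j} Π_i. -/
lemma dyadic_aux (k a P : ℝ) (hk0 : 0 < k) (hka : k < a) (haP : a ≤ P) :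
    ∃ ν : ℤ, 1 ≤ ν ∧ ν ≤ ⌈Real.logb 2 (P / k)⌉ ∧
      (2 : ℝ) ^ (ν - 1) * k < a ∧ a ≤ (2 : ℝ) ^ ν * k := by
  set ν := ⌈Real.logb 2 (a / k)⌉ with hν
  have ha0 : 0 < a := hk0.trans hka
  have hak : 1 < a / k := (one_lt_div hk0).mpr hka
  have hl0 : 0 < Real.logb 2 (a / k) := Real.logb_pos one_lt_two hak
  have hrw : (2 : ℝ) ^ Real.logb 2 (a / k) = a / k :=
    Real.rpow_logb two_pos (by norm_num) (by positivity)
  refine ⟨ν, Int.ceil_pos.mpr hl0, ?_, ?_, ?_⟩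
  · exact Int.ceil_mono (Real.logb_le_logb_of_le one_lt_two (by positivity)
      (by gcongr))
  · have h1 : ((ν : ℝ) - 1) < Real.logb 2 (a / k) := by
      have := Int.ceil_lt_add_one (Real.logb 2 (a / k))
      push_cast at this ⊢
      linarith
    have h2 : (2 : ℝ) ^ ((ν : ℝ) - 1) < a / k := by
      calc (2:ℝ) ^ ((ν:ℝ) - 1) < (2:ℝ) ^ Real.logb 2 (a / k) :=
            Real.rpow_lt_rpow_left_iff one_lt_two |>.mpr h1
        _ = a / k := hrw
    have h3 : (2 : ℝ) ^ ((ν : ℝ) - 1) = (2 : ℝ) ^ (ν - 1 : ℤ) := by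
      rw [← Real.rpow_intCast]
      push_cast
      ring_nf
    rw [← h3, ← lt_div_iff₀ hk0]
    exact h2
  · have h1 : Real.logb 2 (a / k) ≤ (ν : ℝ) := Int.le_ceil _
    have h2 : a / k ≤ (2 : ℝ) ^ (ν : ℝ) := by
      calc a / k = (2:ℝ) ^ Real.logb 2 (a / k) := hrw.symm
        _ ≤ (2:ℝ) ^ (ν : ℝ) := Real.rpow_le_rpow_left_iff one_lt_two |>.mpr h1
    rw [← div_le_iff₀ hk0]
    rw [← Real.rpow_intCast]
    exact_mod_cast h2


/-- The dyadic rectangles `Π_i` (as sets of integer points). `Π_0 = [1,k]×[1,k]`;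
for `ν ≥ 1`, `Π_ν = [2^{ν-1}k+1, 2^ν k]×[1, k/2^ν]` and
`Π_{-ν} = [1, k/2^ν]×[2^{ν-1}k+1, 2^ν k]` (for integer points, the lower bound
`2^{ν-1}k + 1 ≤ x` is expressed as the equivalent `2^{ν-1}k < x`). -/
def PiRect (k : ℝ) (i : ℤ) : Set (ℤ × ℤ) :=
  if i = 0 then
    {q | 1 ≤ q.1 ∧ (q.1 : ℝ) ≤ k ∧ 1 ≤ q.2 ∧ (q.2 : ℝ) ≤ k}
  else if 0 < i then
    {q | (2 : ℝ) ^ (i - 1) * k < (q.1 : ℝ) ∧ (q.1 : ℝ) ≤ (2 : ℝ) ^ i * k ∧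
         1 ≤ q.2 ∧ (q.2 : ℝ) ≤ k / (2 : ℝ) ^ i}
  else
    {q | 1 ≤ q.1 ∧ (q.1 : ℝ) ≤ k / (2 : ℝ) ^ (-i) ∧
         (2 : ℝ) ^ (-i - 1) * k < (q.2 : ℝ) ∧ (q.2 : ℝ) ≤ (2 : ℝ) ^ (-i) * k}

/-- Every integer pair `(x,y)` with `1 ≤ x < p`, `1 ≤ y < p` and `xy ≤ p/t`
lies in the union `Π^t = ∪_{i=-j}^{j} Π_i`. -/
theorem mem_PiRect_union (p : ℕ) (hp : p.Prime) (t : ℝ) (ht1 : 1 < t) (htp : t ≤ p)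
    (k : ℝ) (hk : k = Real.sqrt (2 * p / t))
    (j : ℤ) (hj : j = ⌈Real.logb 2 (p / k)⌉)
    (x y : ℤ) (hx1 : 1 ≤ x) (hxp : x < p) (hy1 : 1 ≤ y) (hyp : y < p)
    (hxy : (x : ℝ) * y ≤ p / t) :
    ∃ i : ℤ, -j ≤ i ∧ i ≤ j ∧ (x, y) ∈ PiRect k i := by
  have hpR : (2 : ℝ) ≤ p := by exact_mod_cast hp.two_le
  have ht0 : (0 : ℝ) < t := lt_trans one_pos ht1
  have hp0 : (0 : ℝ) < p := lt_of_lt_of_le two_pos hpR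
  have hq0 : 0 < 2 * (p : ℝ) / t := by positivity
  have hk0 : 0 < k := by rw [hk]; exact Real.sqrt_pos.mpr hq0
  have hk2 : k ^ 2 = 2 * p / t := by rw [hk, Real.sq_sqrt hq0.le]
  have hxyk : (x : ℝ) * y ≤ k ^ 2 / 2 := by
    have h : k ^ 2 / 2 = (p : ℝ) / t := by rw [hk2]; ring
    linarith
  have hx0 : (0 : ℝ) < x := by exact_mod_cast hx1
  have hy0 : (0 : ℝ) < y := by exact_mod_cast hy1
  have hxpR : (x : ℝ) ≤ p := by exact_mod_cast hxp.le
  have hypR : (y : ℝ) ≤ p := by exact_mod_cast hyp.le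
  have hkp : k ≤ p := by
    have h2 : 2 * (p : ℝ) / t ≤ (p : ℝ) ^ 2 := by
      rw [div_le_iff₀ ht0]; nlinarith
    rw [hk]
    calc Real.sqrt (2 * p / t) ≤ Real.sqrt ((p : ℝ) ^ 2) := Real.sqrt_le_sqrt h2
      _ = p := Real.sqrt_sq hp0.le
  have hj0 : 0 ≤ j := by
    rw [hj]
    exact Int.ceil_nonneg (Real.logb_nonneg one_lt_two ((one_le_div hk0).mpr hkp))
  by_cases hxk : (x : ℝ) ≤ k
  · by_cases hyk : (y : ℝ) ≤ k
    · exact ⟨0, by omega, hj0, by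
        simp only [PiRect, if_pos rfl, Set.mem_setOf_eq]
        exact ⟨hx1, hxk, hy1, hyk⟩⟩
    · push_neg at hyk
      obtain ⟨ν, hν1, hνj, hlo, hhi⟩ := dyadic_aux k (y : ℝ) p hk0 hyk hypR
      have hpow : (0 : ℝ) < (2 : ℝ) ^ (ν - 1 : ℤ) := by positivity
      have h2ν : (2 : ℝ) ^ (ν : ℤ) = 2 * (2 : ℝ) ^ (ν - 1 : ℤ) := by
        rw [mul_comm, ← zpow_add_one₀ (by norm_num : (2:ℝ) ≠ 0), sub_add_cancel]
      have hxle : (x : ℝ) ≤ k / (2 : ℝ) ^ (ν : ℤ) := by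
        rw [le_div_iff₀ (by positivity)]
        nlinarith [mul_lt_mul_of_pos_left hlo hx0]
      refine ⟨-ν, by omega, by omega, ?_⟩
      simp only [PiRect, if_neg (by omega : ¬(-ν = 0)), if_neg (by omega : ¬(0:ℤ) < -ν),
        Set.mem_setOf_eq, neg_neg]
      exact ⟨hx1, hxle, hlo, hhi⟩
  · push_neg at hxk
    obtain ⟨ν, hν1, hνj, hlo, hhi⟩ := dyadic_aux k (x : ℝ) p hk0 hxk hxpR
    have hpow : (0 : ℝ) < (2 : ℝ) ^ (ν - 1 : ℤ) := by positivity
    have h2ν : (2 : ℝ) ^ (ν : ℤ) = 2 * (2 : ℝ) ^ (ν - 1 : ℤ) := by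
      rw [mul_comm, ← zpow_add_one₀ (by norm_num : (2:ℝ) ≠ 0), sub_add_cancel]
    have hyle : (y : ℝ) ≤ k / (2 : ℝ) ^ (ν : ℤ) := by
      rw [le_div_iff₀ (by positivity)]
      nlinarith [mul_lt_mul_of_pos_left hlo hy0]
    refine ⟨ν, by omega, by rw [hj]; omega, ?_⟩
    simp only [PiRect, if_neg (by omega : ¬(ν = 0)), if_pos (by omega : (0:ℤ) < ν),
      Set.mem_setOf_eq]
    exact ⟨hlo, hhi, hy1, hyle⟩
end

section
/- Let p be prime, c ≥ 1, k = √(2p/c), and let Π^c be the union of the 2j+1 ≤ 2 log₂ p dyadic rectangles Π_ν (ν = -j,…,j) as defined above. If χ is a non-principal Dirichlet character modulo p, then |∑_{(x,u)∈Π^c} χ(x)·conj(χ(u))| ≤ 10000 · p^{7/8} · (log p)² / √c. -/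
/-!
Each rectangle `Π_ν` is a product `X × U` of two intervals, so the character sum over it factors
as `(∑_{x ∈ X} χ x) · conj (∑_{u ∈ U} χ u)`, and Burgess bounds it by
`900 p^{3/8} log p · √(#X · #U)`. For every `ν` the integer points satisfy `#X · #U ≤ k²`
(for `ν ≠ 0` the sides have about `2^{|ν|-1} k` and `k / 2^{|ν|}` points). The rectangles are
disjoint, and `Π_ν` contains an integer point only if `2^{|ν|} ≤ k ≤ √(2p)`, so at most
`log₂(2p) + 1` of them contribute.
-/

open scoped Classical

open Finset

section Rectangles

variable {k : ℝ} {i : ℤ} {q : ℤ × ℤ}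

lemma mem_PiRect_zero :
    q ∈ PiRect k 0 ↔ (q.1 : ℝ) ∈ Set.Ioc 0 k ∧ (q.2 : ℝ) ∈ Set.Ioc 0 k := by
  simp only [PiRect, if_pos, Set.mem_ofPred_eq, Set.mem_Ioc, Int.cast_pos, Int.lt_iff_add_one_le,
    zero_add]
  tauto

lemma mem_PiRect_of_pos (hi : 0 < i) :
    q ∈ PiRect k i ↔
      (q.1 : ℝ) ∈ Set.Ioc (2 ^ i / 2 * k) (2 ^ i * k) ∧ (q.2 : ℝ) ∈ Set.Ioc 0 (k / 2 ^ i) := by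
  simp only [PiRect, hi.ne', hi, if_true, if_false, Set.mem_ofPred_eq, Set.mem_Ioc, Int.cast_pos,
    Int.lt_iff_add_one_le, zero_add, zpow_sub_one₀ (two_ne_zero' ℝ), div_eq_mul_inv, and_assoc]

lemma mem_PiRect_neg : q ∈ PiRect k (-i) ↔ q.swap ∈ PiRect k i := by
  rcases lt_trichotomy i 0 with hi | rfl | hi
  · simp only [PiRect, neg_eq_zero, hi.ne, neg_pos.2 hi, if_true, if_false, neg_neg,
      not_lt.2 hi.le, Set.mem_ofPred_eq, Prod.fst_swap, Prod.snd_swap]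
    tauto
  · simp only [PiRect, neg_zero, if_true, Set.mem_ofPred_eq, Prod.fst_swap, Prod.snd_swap]
    tauto
  · simp only [PiRect, neg_eq_zero, hi.ne', hi, if_true, if_false, neg_neg,
      not_lt.2 (neg_nonpos.2 hi.le), Set.mem_ofPred_eq, Prod.fst_swap, Prod.snd_swap]
    tauto

lemma two_zpow_abs_le_of_mem_PiRect (hq : q ∈ PiRect k i) : (2 : ℝ) ^ |i| ≤ k := by
  wlog hi : 0 ≤ i generalizing i q
  · simpa using this ((mem_PiRect_neg (q := q.swap)).2 hq) (by omega)
  have one_le {n : ℤ} (h : (0 : ℝ) < n) : (1 : ℝ) ≤ n := by exact_mod_cast Int.cast_pos.1 h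
  rcases hi.eq_or_lt with rfl | hi
  · obtain ⟨⟨hx₀, hxk⟩, -⟩ := mem_PiRect_zero.1 hq
    simpa using (one_le hx₀).trans hxk
  · obtain ⟨-, hu₀, huk⟩ := (mem_PiRect_of_pos hi).1 hq
    rw [abs_of_pos hi, ← one_mul (2 ^ i), ← le_div_iff₀ (by positivity)]
    exact (one_le hu₀).trans huk

lemma fst_le_of_mem_PiRect (hk : 0 ≤ k) (hq : q ∈ PiRect k i) : (q.1 : ℝ) ≤ 2 ^ max i 0 * k := by
  rcases lt_trichotomy i 0 with hi | rfl | hi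
  · obtain ⟨-, -, hx⟩ := (mem_PiRect_of_pos (neg_pos.2 hi)).1 (mem_PiRect_neg.1 (by rwa [neg_neg]))
    rw [max_eq_right hi.le, zpow_zero, one_mul]
    exact hx.trans (div_le_self hk (one_le_zpow₀ one_le_two (by omega)))
  · simpa using (mem_PiRect_zero.1 hq).1.2
  · simpa [hi.le] using ((mem_PiRect_of_pos hi).1 hq).1.2

lemma PiRect_disjoint_of_lt (hk : 0 ≤ k) {i i' : ℤ} (h : i < i') :
    Disjoint (PiRect k i) (PiRect k i') := by
  wlog hi' : 0 < i' generalizing i i'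
  · refine Set.disjoint_left.2 fun q hq hq' => ?_
    exact Set.disjoint_left.1 (this (neg_lt_neg h) (by omega))
      ((mem_PiRect_neg (q := q.swap)).2 hq') ((mem_PiRect_neg (q := q.swap)).2 hq)
  refine Set.disjoint_left.2 fun q hq hq' => ?_
  have hlt := ((mem_PiRect_of_pos hi').1 hq').1.1
  have hle := fst_le_of_mem_PiRect hk hq
  have hpow : (2 : ℝ) ^ max i 0 ≤ 2 ^ i' / 2 := by
    rw [div_eq_mul_inv, ← zpow_sub_one₀ (two_ne_zero' ℝ)]
    exact zpow_le_zpow_right₀ one_le_two (by omega)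
  nlinarith

lemma sum_filter_exists_mem_PiRect {M : Type*} [AddCommMonoid M] (g : ℤ × ℤ → M)
    (s : Finset (ℤ × ℤ)) (hk : 0 ≤ k) (a b : ℤ) :
    ∑ q ∈ s.filter (fun q => ∃ i : ℤ, a ≤ i ∧ i ≤ b ∧ q ∈ PiRect k i), g q =
      ∑ i ∈ Icc a b, ∑ q ∈ s.filter (· ∈ PiRect k i), g q := by
  have hdisj : (Icc a b : Set ℤ).PairwiseDisjoint fun i => s.filter (· ∈ PiRect k i) := by
    intro i _ i' _ hii'
    refine disjoint_filter.2 fun q _ hq hq' => ?_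
    rcases hii'.lt_or_gt with h | h
    · exact Set.disjoint_left.1 (PiRect_disjoint_of_lt hk h) hq hq'
    · exact Set.disjoint_left.1 (PiRect_disjoint_of_lt hk h) hq' hq
  rw [← sum_biUnion hdisj]
  congr 1
  ext q
  simp only [mem_filter, mem_biUnion, mem_Icc]
  tauto

end Rectangles

lemma norm_sum_prod_mul_conj {ι : Type*} (f : ι → ℂ) (s t : Finset ι) :
    ‖∑ q ∈ s ×ˢ t, f q.1 * starRingEnd ℂ (f q.2)‖ = ‖∑ x ∈ s, f x‖ * ‖∑ u ∈ t, f u‖ := by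
  rw [← Complex.norm_conj (∑ u ∈ t, f u), ← norm_mul, map_sum, sum_mul_sum, sum_product]

section CharacterSums

variable {f : ℤ → ℂ} {A : ℝ}

lemma filter_Icc_cast_mem_Ioc (P : ℤ) {a : ℝ} (ha : 0 ≤ a) (b : ℝ) :
    (Icc 1 P).filter (fun x : ℤ => (x : ℝ) ∈ Set.Ioc a b) = Icc (⌊a⌋ + 1) (min P ⌊b⌋) := by
  have := Int.floor_nonneg.2 ha
  ext x
  simp only [mem_filter, mem_Icc, Set.mem_Ioc, le_min_iff, ← Int.floor_lt, ← Int.le_floor]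
  omega

lemma norm_sum_filter_Ioc_le
    (hf : ∀ M N : ℤ, M ≤ N → ‖∑ x ∈ Icc M N, f x‖ ≤ A * √((N : ℝ) - M + 1))
    (P : ℤ) {a : ℝ} (ha : 0 ≤ a) (b : ℝ) :
    ‖∑ x ∈ (Icc 1 P).filter (fun x : ℤ => (x : ℝ) ∈ Set.Ioc a b), f x‖ ≤
      A * √((⌊b⌋ : ℝ) - ⌊a⌋) := by
  have hA : 0 ≤ A := by simpa using (norm_nonneg _).trans (hf 0 0 le_rfl)
  rw [filter_Icc_cast_mem_Ioc P ha]
  rcases le_or_gt (⌊a⌋ + 1) (min P ⌊b⌋) with h | h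
  · refine (hf _ _ h).trans (mul_le_mul_of_nonneg_left (Real.sqrt_le_sqrt ?_) hA)
    push_cast
    linarith [min_le_right (P : ℝ) ⌊b⌋]
  · rw [Icc_eq_empty_of_lt h, sum_empty, norm_zero]
    positivity

lemma norm_sum_filter_prod_le
    (hf : ∀ M N : ℤ, M ≤ N → ‖∑ x ∈ Icc M N, f x‖ ≤ A * √((N : ℝ) - M + 1))
    (P : ℤ) {R : Set (ℤ × ℤ)} {a₁ b₁ a₂ b₂ : ℝ} (ha₁ : 0 ≤ a₁) (ha₂ : 0 ≤ a₂)
    (hR : ∀ q : ℤ × ℤ, q ∈ R ↔ (q.1 : ℝ) ∈ Set.Ioc a₁ b₁ ∧ (q.2 : ℝ) ∈ Set.Ioc a₂ b₂) :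
    ‖∑ q ∈ (Icc 1 P ×ˢ Icc 1 P).filter (· ∈ R), f q.1 * starRingEnd ℂ (f q.2)‖ ≤
      A ^ 2 * (√((⌊b₁⌋ : ℝ) - ⌊a₁⌋) * √((⌊b₂⌋ : ℝ) - ⌊a₂⌋)) := by
  have hprod : (Icc 1 P ×ˢ Icc 1 P).filter (· ∈ R) =
      (Icc 1 P).filter (fun x : ℤ => (x : ℝ) ∈ Set.Ioc a₁ b₁) ×ˢ
        (Icc 1 P).filter (fun x : ℤ => (x : ℝ) ∈ Set.Ioc a₂ b₂) := by
    ext q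
    simp only [mem_filter, mem_product, hR]
    tauto
  have h₁ := norm_sum_filter_Ioc_le hf P ha₁ b₁
  rw [hprod, norm_sum_prod_mul_conj]
  calc _ ≤ (A * √((⌊b₁⌋ : ℝ) - ⌊a₁⌋)) * (A * √((⌊b₂⌋ : ℝ) - ⌊a₂⌋)) :=
        mul_le_mul h₁ (norm_sum_filter_Ioc_le hf P ha₂ b₂) (norm_nonneg _)
          ((norm_nonneg _).trans h₁)
    _ = _ := by ring

lemma sqrt_floor_sub_floor_mul_sqrt_floor_le {k t : ℝ} (hk : 0 ≤ k) (ht : 2 ≤ t) :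
    √((⌊t * k⌋ : ℝ) - ⌊t / 2 * k⌋) * √(⌊k / t⌋ : ℝ) ≤ k := by
  set m := ⌊k / t⌋
  have hm₀ : (0 : ℝ) ≤ m := by exact_mod_cast Int.floor_nonneg.2 (by positivity)
  have hmt : (m : ℝ) * t ≤ k := (le_div_iff₀ (by positivity)).1 (Int.floor_le _)
  have hm_sq : (m : ℝ) ≤ m ^ 2 := by exact_mod_cast Int.le_self_sq m
  have hd₀ : (0 : ℝ) ≤ (⌊t * k⌋ : ℝ) - ⌊t / 2 * k⌋ := by
    rw [sub_nonneg, Int.cast_le]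
    exact Int.floor_mono (by nlinarith)
  have hd : (⌊t * k⌋ : ℝ) - ⌊t / 2 * k⌋ ≤ t / 2 * k + 1 := by
    linarith [Int.floor_le (t * k), Int.lt_floor_add_one (t / 2 * k)]
  rw [← Real.sqrt_mul hd₀]
  -- `m` is a nonnegative integer, so `m ≤ m²`: this absorbs the `+ 1` lost to rounding in `hd`.
  refine (Real.sqrt_le_sqrt ?_).trans_eq (Real.sqrt_sq hk)
  have h2m : 2 * (m : ℝ) ≤ k := by nlinarith
  nlinarith [mul_le_mul_of_nonneg_right hd hm₀, mul_le_mul_of_nonneg_left hmt hk,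
    pow_le_pow_left₀ (by positivity) h2m 2]

lemma norm_sum_filter_PiRect_le
    (hf : ∀ M N : ℤ, M ≤ N → ‖∑ x ∈ Icc M N, f x‖ ≤ A * √((N : ℝ) - M + 1))
    (P : ℤ) {k : ℝ} (hk : 0 ≤ k) (i : ℤ) :
    ‖∑ q ∈ (Icc 1 P ×ˢ Icc 1 P).filter (· ∈ PiRect k i), f q.1 * starRingEnd ℂ (f q.2)‖ ≤
      A ^ 2 * k := by
  have two_le {n : ℤ} (hn : 0 < n) : (2 : ℝ) ≤ 2 ^ n := by
    simpa using zpow_le_zpow_right₀ one_le_two (show 1 ≤ n by omega)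
  rcases lt_trichotomy i 0 with hi | rfl | hi
  · obtain ⟨n, hn, rfl⟩ : ∃ n, 0 < n ∧ i = -n := ⟨-i, by omega, by omega⟩
    refine (norm_sum_filter_prod_le hf P le_rfl (by positivity)
      fun q => mem_PiRect_neg.trans ((mem_PiRect_of_pos hn).trans and_comm)).trans ?_
    refine mul_le_mul_of_nonneg_left ?_ (sq_nonneg A)
    rw [mul_comm, Int.floor_zero, Int.cast_zero, sub_zero]
    exact sqrt_floor_sub_floor_mul_sqrt_floor_le hk (two_le hn)
  · refine (norm_sum_filter_prod_le hf P le_rfl le_rfl fun q => mem_PiRect_zero).trans ?_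
    refine mul_le_mul_of_nonneg_left ?_ (sq_nonneg A)
    rw [Int.floor_zero, Int.cast_zero, sub_zero,
      Real.mul_self_sqrt (by exact_mod_cast Int.floor_nonneg.2 hk)]
    exact Int.floor_le k
  · refine (norm_sum_filter_prod_le hf P (by positivity) le_rfl
      fun q => mem_PiRect_of_pos hi).trans ?_
    refine mul_le_mul_of_nonneg_left ?_ (sq_nonneg A)
    rw [Int.floor_zero, Int.cast_zero, sub_zero]
    exact sqrt_floor_sub_floor_mul_sqrt_floor_le hk (two_le hi)

end CharacterSums

lemma le_logb_div_two_of_two_zpow_le_sqrt {n : ℤ} {x : ℝ} (h : (2 : ℝ) ^ n ≤ √x) :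
    (n : ℝ) ≤ Real.logb 2 x / 2 := by
  have hx : 0 ≤ x := (Real.sqrt_pos.1 ((zpow_pos two_pos n).trans_le h)).le
  have hlog := Real.log_le_log (zpow_pos two_pos n) h
  rw [Real.log_zpow, Real.log_sqrt hx] at hlog
  rw [Real.logb, div_div, le_div_iff₀ (by positivity)]
  linarith

lemma card_filter_abs_le (s : Finset ℤ) {y : ℝ} (hy : 0 ≤ y) :
    (#(s.filter fun i => ((|i| : ℤ) : ℝ) ≤ y) : ℝ) ≤ 2 * y + 1 := by
  have hsub : s.filter (fun i => ((|i| : ℤ) : ℝ) ≤ y) ⊆ Icc (-⌊y⌋) ⌊y⌋ := fun i hi => by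
    rw [mem_Icc, ← abs_le]
    exact Int.le_floor.2 (mem_filter.1 hi).2
  have hcard : ((#(Icc (-⌊y⌋) ⌊y⌋) : ℤ) : ℝ) = 2 * ⌊y⌋ + 1 := by
    rw [Int.card_Icc, Int.toNat_of_nonneg (by linarith [Int.floor_nonneg.2 hy])]
    push_cast
    ring
  calc (#(s.filter fun i => ((|i| : ℤ) : ℝ) ≤ y) : ℝ) ≤ #(Icc (-⌊y⌋) ⌊y⌋) := by
        exact_mod_cast card_le_card hsub
    _ = 2 * ⌊y⌋ + 1 := by exact_mod_cast hcard
    _ ≤ 2 * y + 1 := by linarith [Int.floor_le y]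

lemma logb_two_mul_add_one_mul_log_le (n : ℕ) :
    (Real.logb 2 (2 * n) + 1) * Real.log n ≤ 3 * Real.log n ^ 2 / Real.log 2 := by
  rcases le_or_gt n 1 with hn | hn
  · interval_cases n <;> simp
  have hl₂ : 0 < Real.log 2 := Real.log_pos one_lt_two
  have hl : Real.log 2 ≤ Real.log n := Real.log_le_log two_pos (by exact_mod_cast hn)
  rw [Real.logb, Real.log_mul two_ne_zero (by positivity), div_add_one hl₂.ne',
    div_mul_eq_mul_div, div_le_div_iff_of_pos_right hl₂]
  nlinarith

lemma logb_two_mul_add_one_mul_burgess_le (p : ℕ) {c : ℝ} (hc : 0 < c) :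
    (Real.logb 2 (2 * p) + 1) *
        ((30 * (p : ℝ) ^ ((3 : ℝ) / 16) * Real.log p ^ ((1 : ℝ) / 2)) ^ 2 * √(2 * p / c)) ≤
      10000 * (p : ℝ) ^ ((7 : ℝ) / 8) * Real.log p ^ 2 / √c := by
  have hp : (0 : ℝ) ≤ p := Nat.cast_nonneg p
  have hlog : 0 ≤ Real.log p := Real.log_natCast_nonneg p
  have hA : (30 * (p : ℝ) ^ ((3 : ℝ) / 16) * Real.log p ^ ((1 : ℝ) / 2)) ^ 2 =
      900 * (p : ℝ) ^ ((3 : ℝ) / 8) * Real.log p := by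
    rw [← Real.sqrt_eq_rpow, mul_pow, mul_pow, Real.sq_sqrt hlog, ← Real.rpow_mul_natCast hp]
    norm_num
  have hk : √(2 * p / c) = √2 * √p / √c := by
    rw [Real.sqrt_div (by positivity), Real.sqrt_mul zero_le_two]
  have hp78 : (p : ℝ) ^ ((3 : ℝ) / 8) * √p = (p : ℝ) ^ ((7 : ℝ) / 8) := by
    rw [Real.sqrt_eq_rpow, ← Real.rpow_add' hp (by norm_num)]
    norm_num
  have hl₂ := Real.log_two_gt_d9
  have hs₂ : √2 < 1.415 := (Real.sqrt_lt' (by norm_num)).2 (by norm_num)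
  have hc' : 0 < √c := Real.sqrt_pos.2 hc
  calc _ = 900 * √2 * ((Real.logb 2 (2 * p) + 1) * Real.log p) *
        ((p : ℝ) ^ ((3 : ℝ) / 8) * √p) / √c := by rw [hA, hk]; ring
    _ ≤ 900 * √2 * (3 * Real.log p ^ 2 / Real.log 2) * (p : ℝ) ^ ((7 : ℝ) / 8) / √c := by
        rw [hp78]
        gcongr
        exact logb_two_mul_add_one_mul_log_le p
    _ ≤ 10000 * (p : ℝ) ^ ((7 : ℝ) / 8) * Real.log p ^ 2 / √c := by
        have hconst : 900 * √2 * 3 / Real.log 2 ≤ 10000 := by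
          rw [div_le_iff₀ (by linarith)]
          linarith
        rw [div_le_div_iff_of_pos_right hc']
        convert mul_le_mul_of_nonneg_right hconst
          (by positivity : 0 ≤ (p : ℝ) ^ ((7 : ℝ) / 8) * Real.log p ^ 2) using 1 <;> ring

theorem PiRect_union_char_sum_general (p : ℕ) (c : ℝ) (hc : 1 ≤ c)
    (k : ℝ) (hk : k = Real.sqrt (2 * p / c))
    (j : ℤ)
    (χ : DirichletCharacter ℂ p)
    (hBurgess : ∀ M N : ℤ, M ≤ N →
      ‖∑ x ∈ Finset.Icc M N, χ (x : ZMod p)‖ ≤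
        30 * ((N : ℝ) - M + 1) ^ ((1 : ℝ) / 2) * (p : ℝ) ^ ((3 : ℝ) / 16) *
          Real.log p ^ ((1 : ℝ) / 2)) :
    ‖∑ q ∈ (Finset.Icc (1 : ℤ) (2 * p) ×ˢ Finset.Icc (1 : ℤ) (2 * p)).filter
        (fun q => ∃ i : ℤ, -j ≤ i ∧ i ≤ j ∧ q ∈ PiRect k i),
        χ (q.1 : ZMod p) * (starRingEnd ℂ) (χ (q.2 : ZMod p))‖ ≤
      10000 * (p : ℝ) ^ ((7 : ℝ) / 8) * Real.log p ^ 2 / Real.sqrt c := by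
  set A : ℝ := 30 * (p : ℝ) ^ ((3 : ℝ) / 16) * Real.log p ^ ((1 : ℝ) / 2)
  have hf (M N : ℤ) (h : M ≤ N) : ‖∑ x ∈ Icc M N, χ (x : ZMod p)‖ ≤ A * √((N : ℝ) - M + 1) :=
    (hBurgess M N h).trans_eq (by rw [Real.sqrt_eq_rpow]; ring)
  have hk₀ : 0 ≤ k := hk ▸ Real.sqrt_nonneg _
  set y := Real.logb 2 (2 * p) / 2
  have hy : 0 ≤ y := by
    have : 0 ≤ Real.log (2 * p) := by exact_mod_cast Real.log_natCast_nonneg (2 * p)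
    exact div_nonneg (div_nonneg this (Real.log_nonneg one_le_two)) zero_le_two
  set S : ℤ → ℂ := fun i =>
    ∑ q ∈ (Icc 1 (2 * p : ℤ) ×ˢ Icc 1 (2 * p : ℤ)).filter (· ∈ PiRect k i),
      χ (q.1 : ZMod p) * starRingEnd ℂ (χ (q.2 : ZMod p))
  have hk_le : k ≤ √(2 * p) := hk ▸ Real.sqrt_le_sqrt (div_le_self (by positivity) hc)
  have hS (i : ℤ) (_ : i ∈ Icc (-j) j) (hi : ‖S i‖ ≠ 0) : ((|i| : ℤ) : ℝ) ≤ y := by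
    obtain ⟨q, hq, -⟩ := exists_ne_zero_of_sum_ne_zero (norm_ne_zero_iff.1 hi)
    exact le_logb_div_two_of_two_zpow_le_sqrt
      ((two_zpow_abs_le_of_mem_PiRect (mem_filter.1 hq).2).trans hk_le)
  calc _ = ‖∑ i ∈ Icc (-j) j, S i‖ := by rw [sum_filter_exists_mem_PiRect _ _ hk₀]
    _ ≤ ∑ i ∈ Icc (-j) j, ‖S i‖ := norm_sum_le _ _
    _ = ∑ i ∈ (Icc (-j) j).filter (fun i => ((|i| : ℤ) : ℝ) ≤ y), ‖S i‖ :=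
        (sum_filter_of_ne hS).symm
    _ ≤ (2 * y + 1) * (A ^ 2 * k) := by
        refine (sum_le_card_nsmul _ _ _ fun i _ => norm_sum_filter_PiRect_le hf _ hk₀ i).trans ?_
        rw [nsmul_eq_mul]
        gcongr
        exact card_filter_abs_le _ hy
    _ ≤ _ := by
        rw [hk, show 2 * y + 1 = Real.logb 2 (2 * p) + 1 by ring]
        exact logb_two_mul_add_one_mul_burgess_le p (by linarith)

/-- **Lemma 1.** Let `p` be prime, `c ≥ 1`, `k = √(2p/c)`, and `Π^c` the union of the
dyadic rectangles `Π_i`, `i = -j, …, j`, where `j = ⌈log₂(p/k)⌉` (all integer points of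
`Π^c` have coordinates in `[1, 2p]`). Assuming Burgess's inequality with `r = 2`, for any
non-principal Dirichlet character `χ` mod `p`,
`|∑_{(x,u)∈Π^c} χ(x)·conj(χ(u))| ≤ 10000 · p^{7/8} · (log p)² / √c`. -/
theorem PiRect_union_char_sum (p : ℕ) [Fact p.Prime] (c : ℝ) (hc : 1 ≤ c)
    (k : ℝ) (hk : k = Real.sqrt (2 * p / c))
    (j : ℤ) (hj : j = ⌈Real.logb 2 (p / k)⌉)
    (χ : DirichletCharacter ℂ p) (hχ : χ ≠ 1)
    (hBurgess : ∀ M N : ℤ, M ≤ N →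
      ‖∑ x ∈ Finset.Icc M N, χ (x : ZMod p)‖ ≤
        30 * ((N : ℝ) - M + 1) ^ ((1 : ℝ) / 2) * (p : ℝ) ^ ((3 : ℝ) / 16) *
          Real.log p ^ ((1 : ℝ) / 2)) :
    ‖∑ q ∈ (Finset.Icc (1 : ℤ) (2 * p) ×ˢ Finset.Icc (1 : ℤ) (2 * p)).filter
        (fun q => ∃ i : ℤ, -j ≤ i ∧ i ≤ j ∧ q ∈ PiRect k i),
        χ (q.1 : ZMod p) * (starRingEnd ℂ) (χ (q.2 : ZMod p))‖ ≤
      10000 * (p : ℝ) ^ ((7 : ℝ) / 8) * Real.log p ^ 2 / Real.sqrt c :=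
  PiRect_union_char_sum_general p c hc k hk j χ hBurgess
end

section
/- Let p be prime, a an integer with 1 ≤ a < p, and t > 1 real. If ‖ax/p‖ > 1/(xt) for all integers 1 ≤ x < p, then every partial quotient b_k(a) in the continued fraction expansion a/p = [0; b_1, b_2, …, b_l] satisfies b_k(a) < t. -/
/-- The list of partial quotients `[b₁, …, b_l]` of the continued fraction expansion
`a/p = [0; b₁, …, b_l]` (computed by the Euclidean algorithm). -/
def cfl : ℕ → ℕ → List ℕ
  | 0, _ => []
  | (a + 1), p => (p / (a + 1)) :: cfl (p % (a + 1)) (a + 1)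
termination_by a _ => a
decreasing_by exact Nat.mod_lt _ (Nat.succ_pos _)

/-- Distance from a real number to the nearest integer. -/
noncomputable def distNearestInt (z : ℝ) : ℝ := |z - round z|

/-!
Running the Euclidean algorithm on `(a, p)` alongside the convergents `u / x` of `a / p`, the
partial quotient `b` that follows `u / x` satisfies `b * x * |a x - u p| ≤ p`, so that
`‖a x / p‖ ≤ 1 / (b x)` with `1 ≤ x < p`. Comparing with the hypothesis `‖a x / p‖ > 1 / (x t)`
at this `x` gives `b < t`.
-/

theorem pos_of_mem_cfl {a p b : ℕ} (hap : a ≤ p) (hb : b ∈ cfl a p) : 0 < b := by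
  induction a, p using cfl.induct with
  | case1 => simp [cfl] at hb
  | case2 a p ih =>
    rw [cfl, List.mem_cons] at hb
    rcases hb with rfl | hb
    · exact Nat.div_pos hap a.succ_pos
    · exact ih (Nat.mod_lt _ a.succ_pos).le hb

/-- `u / x` is the convergent of `a / p` preceding the partial quotient `b`, and `r` is the
remainder `|a x - u p|` of the Euclidean algorithm at that stage. -/
theorem exists_convergent_of_mem_cfl {a p b : ℕ} (hap : a ≤ p) (hb : b ∈ cfl a p) :
    ∃ x u r : ℕ, 0 < x ∧ 0 < r ∧ r ≤ a ∧ |(a * x : ℤ) - u * p| = r ∧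
      b * x * r ≤ p ∧ b * u * r ≤ a := by
  induction a, p using cfl.induct generalizing b with
  | case1 => simp [cfl] at hb
  | case2 a p ih =>
    rw [cfl, List.mem_cons] at hb
    rcases hb with rfl | hb
    · exact ⟨1, 0, a + 1, one_pos, a.succ_pos, le_rfl, by simp; positivity,
        by simpa using Nat.div_mul_le_self p _, by simp⟩
    · have hs : p % (a + 1) < a + 1 := Nat.mod_lt _ a.succ_pos
      obtain ⟨x, u, r, hx, hr, hrs, habs, hbx, hbu⟩ := ih hs.le hb
      have hq : 0 < p / (a + 1) := Nat.div_pos hap a.succ_pos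
      have hp : (a + 1) * (p / (a + 1)) + p % (a + 1) = p := Nat.div_add_mod p _
      refine ⟨p / (a + 1) * x + u, x, r, by positivity, hr, by omega, ?_, ?_, hbx⟩
      · have hpZ : ((a + 1 : ℕ) * (p / (a + 1) : ℕ) + (p % (a + 1) : ℕ) : ℤ) = p := by
          exact_mod_cast hp
        rw [← habs, ← abs_neg]
        congr 1
        push_cast at hpZ ⊢
        linear_combination -(x : ℤ) * hpZ
      · calc b * (p / (a + 1) * x + u) * r = p / (a + 1) * (b * x * r) + b * u * r := by ring
          _ ≤ p / (a + 1) * (a + 1) + p % (a + 1) := by gcongr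
          _ = p := by rw [mul_comm]; exact hp

theorem distNearestInt_le (z : ℝ) (m : ℤ) : distNearestInt z ≤ |z - m| := round_le z m

theorem exists_distNearestInt_le_of_mem_cfl {a p b : ℕ} (hap : a < p) (hb : b ∈ cfl a p) :
    ∃ x : ℕ, 0 < x ∧ x < p ∧ distNearestInt (a * x / p) ≤ 1 / (b * x) := by
  obtain ⟨x, u, r, hx, hr, hra, habs, hbx, -⟩ := exists_convergent_of_mem_cfl hap.le hb
  have hb0 := pos_of_mem_cfl hap.le hb
  have hxp : x < p := by
    have hxle : x ≤ p :=
      ((Nat.le_mul_of_pos_left x hb0).trans (Nat.le_mul_of_pos_right _ hr)).trans hbx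
    refine lt_of_le_of_ne hxle ?_
    rintro rfl
    have hdvd : (x : ℤ) ∣ r := by
      rw [← habs]
      exact (dvd_abs _ _).mpr ⟨a - u, by ring⟩
    have := Nat.le_of_dvd hr (by exact_mod_cast hdvd)
    omega
  refine ⟨x, hx, hxp, ?_⟩
  have hp : (0 : ℝ) < p := by exact_mod_cast hx.trans hxp
  have habsR : |(a * x : ℝ) - u * p| = r := by exact_mod_cast habs
  have hbxR : (b * x * r : ℝ) ≤ p := by exact_mod_cast hbx
  calc distNearestInt (a * x / p) ≤ |(a * x / p : ℝ) - (u : ℤ)| := distNearestInt_le _ _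
    _ = |((a * x : ℝ) - u * p) / p| := by
      rw [sub_div, mul_div_cancel_right₀ _ hp.ne', Int.cast_natCast]
    _ = r / p := by rw [abs_div, habsR, abs_of_pos hp]
    _ ≤ 1 / (b * x) := by
      rw [div_le_div_iff₀ hp (by positivity)]
      linarith

theorem partial_quotients_lt_general (p : ℕ) (a : ℕ) (hap : a < p)
    (t : ℝ) (ht : 1 < t)
    (H : ∀ x : ℕ, 1 ≤ x → x < p →
      1 / ((x : ℝ) * t) < distNearestInt ((a : ℝ) * x / p))
    (k : ℕ) (hk : k < (cfl a p).length) :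
    ((cfl a p).get ⟨k, hk⟩ : ℝ) < t := by
  set b := (cfl a p).get ⟨k, hk⟩
  have hb : b ∈ cfl a p := List.get_mem _ _
  obtain ⟨x, hx, hxp, hdist⟩ := exists_distNearestInt_le_of_mem_cfl hap hb
  have hlt : 1 / ((x : ℝ) * t) < 1 / ((b : ℝ) * x) := (H x hx hxp).trans_le hdist
  have hb0 : (0 : ℝ) < b := by exact_mod_cast pos_of_mem_cfl hap.le hb
  have hx0 : (0 : ℝ) < x := by exact_mod_cast hx
  rw [one_div_lt_one_div (by positivity) (by positivity), mul_comm] at hlt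
  exact lt_of_mul_lt_mul_left hlt hx0.le

/-- If `‖ax/p‖ > 1/(xt)` for all integers `1 ≤ x < p` (with `t > 1`), then every
partial quotient `b_k(a)` of the continued fraction of `a/p` satisfies `b_k(a) < t`. -/
theorem partial_quotients_lt (p : ℕ) (hp : p.Prime) (a : ℕ) (ha1 : 1 ≤ a) (hap : a < p)
    (t : ℝ) (ht : 1 < t)
    (H : ∀ x : ℕ, 1 ≤ x → x < p →
      1 / ((x : ℝ) * t) < distNearestInt ((a : ℝ) * x / p))
    (k : ℕ) (hk : k < (cfl a p).length) :
    ((cfl a p).get ⟨k, hk⟩ : ℝ) < t :=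
  partial_quotients_lt_general p a hap t ht H k hk
end

section
/- Let p be prime, a an integer with 1 ≤ a < p, and define f_a(x) = c if c is the (unique) positive integer with 1/((c+1)x) ≤ ‖ax/p‖ < 1/(cx), and f_a(x) = 0 if ‖ax/p‖ ≥ 1/x. Then ∑_{x=1}^{p-1} f_a(x) ≥ (∑_{i=1}^{l(a)} b_i(a)) - 5·log p. -/
/-!
Run the Euclidean algorithm on `(p, a)`: remainders `rₙ`, partial quotients `bₙ₊₁ = ⌊rₙ / rₙ₊₁⌋`
and convergent denominators `qₙ`. Then `rₙ qₙ₊₁ + rₙ₊₁ qₙ = p` and `a qₙ ≡ ±rₙ (mod p)`. When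
`bₙ₊₁ ≥ 2` we have `2 rₙ₊₁ ≤ rₙ ≤ p`, so `‖a qₙ₊₁ / p‖ = rₙ₊₁ / p` and
`f_a(qₙ₊₁) = ⌊(p - 1) / (qₙ₊₁ rₙ₊₁)⌋ ≥ bₙ₊₁ - 1`. Indices with `bₙ₊₁ = 1` contribute nothing, and
since `q` is nondecreasing with `qₙ₊₂ ≥ 2 qₙ₊₁` when `bₙ₊₁ ≥ 2`, the remaining `qₙ₊₁` are pairwise
distinct; hence `∑ f_a ≥ ∑ bᵢ - l`. Finally the `qₙ` grow at least like Fibonacci numbers while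
`2 q_l ≤ r_{l-1} q_l ≤ p`, which gives `2^l ≤ p²`, so `l ≤ 5 log p`.
-/

open scoped Classical

/-- `f_a(x) = c` if `c` is the (unique) positive integer with
`1/((c+1)x) ≤ ‖ax/p‖ < 1/(cx)`, and `f_a(x) = 0` otherwise. -/
noncomputable def fA (p a x : ℕ) : ℕ :=
  if h : ∃ c : ℕ, 0 < c ∧ 1 / (((c : ℝ) + 1) * x) ≤ distNearestInt ((a : ℝ) * x / p) ∧
      distNearestInt ((a : ℝ) * x / p) < 1 / ((c : ℝ) * x) then h.choose else 0

theorem distNearestInt_intCast_add {k : ℤ} {e : ℝ} (he : |e| ≤ 1 / 2) :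
    distNearestInt (k + e) = |e| := by
  rw [distNearestInt, round_intCast_add, Int.cast_add, add_sub_add_left_eq_sub]
  refine le_antisymm (by simpa using round_le e 0) ?_
  rcases eq_or_ne (round e) 0 with h | h
  · simp [h]
  · have hround : (1 : ℝ) ≤ |(round e : ℝ)| := by exact_mod_cast Int.one_le_abs h
    have := abs_sub_abs_le_abs_sub (round e : ℝ) e
    rw [abs_sub_comm] at this
    linarith

section fA

variable {p a x r : ℕ}

theorem fA_condition_iff_eq_div (hp : 0 < p) (hx : 0 < x) (hr : 0 < r)
    (h : distNearestInt (a * x / p) = r / p) {c : ℕ} (hc : 0 < c) :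
    (1 / (((c : ℝ) + 1) * x) ≤ distNearestInt (a * x / p) ∧
      distNearestInt (a * x / p) < 1 / ((c : ℝ) * x)) ↔ c = (p - 1) / (x * r) := by
  have hxr : 0 < x * r := Nat.mul_pos hx hr
  rw [h, div_le_div_iff₀ (by positivity) (by positivity),
    div_lt_div_iff₀ (by positivity) (by positivity), eq_comm, Nat.div_eq_iff hxr]
  norm_cast
  rw [show r * ((c + 1) * x) = c * (x * r) + x * r by ring, show r * (c * x) = c * (x * r) by ring]
  omega

theorem fA_eq_of_distNearestInt_eq (hp : 0 < p) (hx : 0 < x) (hr : 0 < r)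
    (h : distNearestInt (a * x / p) = r / p) : fA p a x = (p - 1) / (x * r) := by
  unfold fA
  split_ifs with hex
  · obtain ⟨hc, hcond⟩ := hex.choose_spec
    exact (fA_condition_iff_eq_div hp hx hr h hc).1 hcond
  · by_contra hne
    have hc : 0 < (p - 1) / (x * r) := Nat.pos_of_ne_zero (Ne.symm hne)
    exact hex ⟨_, hc, (fA_condition_iff_eq_div hp hx hr h hc).2 rfl⟩

end fA

theorem two_pow_succ_le_sq_two_mul_fib : ∀ n, 2 ^ (n + 1) ≤ (2 * Nat.fib (n + 1)) ^ 2
  | 0 => by simp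
  | 1 => by simp [Nat.fib_add_two]
  | n + 2 => by
    have ih := two_pow_succ_le_sq_two_mul_fib n
    have hfib : 2 * Nat.fib (n + 1) ≤ Nat.fib (n + 3) := by
      rw [Nat.fib_add_two, two_mul]
      exact Nat.add_le_add_left Nat.fib_le_fib_succ _
    calc 2 ^ (n + 3) = 4 * 2 ^ (n + 1) := by ring
      _ ≤ 4 * (2 * Nat.fib (n + 1)) ^ 2 := Nat.mul_le_mul_left 4 ih
      _ = (2 * (2 * Nat.fib (n + 1))) ^ 2 := by ring
      _ ≤ (2 * Nat.fib (n + 3)) ^ 2 := by gcongr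

namespace Euclid

def rem (a p : ℕ) : ℕ → ℕ
  | 0 => p
  | 1 => a
  | n + 2 => rem a p n % rem a p (n + 1)

def partialQuot (a p n : ℕ) : ℕ := rem a p n / rem a p (n + 1)

/-- `denom a p (n + 1)` is the denominator of the convergent `[0; b₁, …, bₙ]` of `a / p`,
where `bₖ = partialQuot a p (k - 1)`. -/
def denom (a p : ℕ) : ℕ → ℕ
  | 0 => 0
  | 1 => 1
  | n + 2 => partialQuot a p n * denom a p (n + 1) + denom a p n

theorem rem_succ (a p : ℕ) : ∀ n, rem a p (n + 1) = rem (p % a) a n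
  | 0 => rfl
  | 1 => rfl
  | n + 2 => by rw [rem, rem_succ a p n, rem_succ a p (n + 1), rem]

theorem partialQuot_succ (a p n : ℕ) : partialQuot a p (n + 1) = partialQuot (p % a) a n := by
  rw [partialQuot, partialQuot, rem_succ, rem_succ]

theorem sum_cfl (a p : ℕ) :
    (cfl a p).sum = ∑ n ∈ Finset.range (cfl a p).length, partialQuot a p n := by
  induction a, p using cfl.induct with
  | case1 p => simp [cfl]
  | case2 a p ih =>
    rw [cfl, List.sum_cons, List.length_cons, Finset.sum_range_succ', ih, add_comm]
    simp only [partialQuot_succ]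
    rfl

theorem rem_succ_pos {a p n : ℕ} (hn : n < (cfl a p).length) : 0 < rem a p (n + 1) := by
  induction a, p using cfl.induct generalizing n with
  | case1 p => simp [cfl] at hn
  | case2 a p ih =>
    cases n with
    | zero => exact Nat.succ_pos a
    | succ m =>
      rw [rem_succ]
      exact ih (by simpa [cfl] using hn)

theorem rem_mul_denom_add (a p : ℕ) :
    ∀ n, rem a p n * denom a p (n + 1) + rem a p (n + 1) * denom a p n = p
  | 0 => by simp [rem, denom]
  | n + 1 => by
    calc rem a p (n + 1) * denom a p (n + 2) + rem a p (n + 2) * denom a p (n + 1)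
        = (rem a p (n + 1) * partialQuot a p n + rem a p (n + 2)) * denom a p (n + 1)
            + rem a p (n + 1) * denom a p n := by rw [denom]; ring
      _ = p := by rw [partialQuot, rem, Nat.div_add_mod, rem_mul_denom_add a p n]

theorem rem_mul_denom_succ_le (a p n : ℕ) : rem a p n * denom a p (n + 1) ≤ p := by
  conv_rhs => rw [← rem_mul_denom_add a p n]
  exact Nat.le_add_right _ _

theorem mul_denom_modEq (a p : ℕ) :
    ∀ n, (a : ℤ) * denom a p n ≡ (-1) ^ (n + 1) * rem a p n [ZMOD p]
  | 0 => by simp [denom, rem, Int.ModEq]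
  | 1 => by simp [denom, rem, Int.ModEq]
  | n + 2 => by
    have hdiv : (rem a p n : ℤ) = rem a p (n + 1) * partialQuot a p n + rem a p (n + 2) := by
      exact_mod_cast (Nat.div_add_mod (rem a p n) (rem a p (n + 1))).symm
    calc (a : ℤ) * denom a p (n + 2)
        = partialQuot a p n * (a * denom a p (n + 1)) + a * denom a p n := by
          rw [denom]; push_cast; ring
      _ ≡ partialQuot a p n * ((-1) ^ (n + 2) * rem a p (n + 1))
            + (-1) ^ (n + 1) * rem a p n [ZMOD p] :=
          ((mul_denom_modEq a p (n + 1)).mul_left _).add (mul_denom_modEq a p n)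
      _ = (-1) ^ (n + 3) * rem a p (n + 2) := by rw [hdiv]; ring

theorem distNearestInt_mul_denom_div {a p n : ℕ} (hp : 0 < p) (h : 2 * rem a p n ≤ p) :
    distNearestInt (a * denom a p n / p) = rem a p n / p := by
  obtain ⟨k, hk⟩ := (mul_denom_modEq a p n).symm.dvd
  have hkR : (a : ℝ) * denom a p n - (-1) ^ (n + 1) * rem a p n = p * k := by exact_mod_cast hk
  have hsplit : (a * denom a p n / p : ℝ) = k + (-1) ^ (n + 1) * rem a p n / p := by
    field_simp
    linear_combination hkR
  have habs : |(-1) ^ (n + 1) * (rem a p n : ℝ) / p| = rem a p n / p := by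
    simp [abs_div]
  have hhalf : (rem a p n / p : ℝ) ≤ 1 / 2 := by
    rw [div_le_iff₀ (by positivity)]
    have : (2 * rem a p n : ℝ) ≤ p := by exact_mod_cast h
    linarith
  rw [hsplit, distNearestInt_intCast_add (habs ▸ hhalf), habs]

section

variable {a p : ℕ}

theorem rem_succ_lt (hap : a < p) {n : ℕ} (hn : n < (cfl a p).length) :
    rem a p (n + 1) < rem a p n := by
  cases n with
  | zero => exact hap
  | succ m => exact Nat.mod_lt _ (rem_succ_pos (Nat.lt_of_succ_lt hn))

theorem two_le_rem (hap : a < p) {n : ℕ} (hn : n < (cfl a p).length) : 2 ≤ rem a p n :=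
  Nat.lt_of_le_of_lt (rem_succ_pos hn) (rem_succ_lt hap hn)

theorem one_le_partialQuot (hap : a < p) {n : ℕ} (hn : n < (cfl a p).length) :
    1 ≤ partialQuot a p n :=
  (Nat.one_le_div_iff (rem_succ_pos hn)).2 (rem_succ_lt hap hn).le

theorem fib_le_denom (hap : a < p) : ∀ n ≤ (cfl a p).length, Nat.fib n ≤ denom a p n
  | 0, _ => by simp [denom]
  | 1, _ => by simp [denom]
  | n + 2, hn => by
    have h0 := fib_le_denom hap n (by omega)
    have h1 := fib_le_denom hap (n + 1) (by omega)
    have hb := one_le_partialQuot hap (n := n) (by omega)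
    have hq := Nat.le_mul_of_pos_left (denom a p (n + 1)) hb
    rw [Nat.fib_add_two, denom]
    omega

theorem denom_succ_pos (hap : a < p) {n : ℕ} (hn : n < (cfl a p).length) :
    0 < denom a p (n + 1) :=
  Nat.lt_of_lt_of_le (Nat.fib_pos.2 n.succ_pos) (fib_le_denom hap (n + 1) hn)

theorem denom_succ_mem_Icc (hap : a < p) {n : ℕ} (hn : n < (cfl a p).length) :
    denom a p (n + 1) ∈ Finset.Icc 1 (p - 1) := by
  have h2q : 2 * denom a p (n + 1) ≤ p :=
    (Nat.mul_le_mul_right _ (two_le_rem hap hn)).trans (rem_mul_denom_succ_le a p n)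
  have := denom_succ_pos hap hn
  exact Finset.mem_Icc.2 ⟨this, by omega⟩

theorem monotoneOn_denom_succ (hap : a < p) :
    MonotoneOn (fun n ↦ denom a p (n + 1)) (Set.Iio (cfl a p).length) := by
  refine monotoneOn_of_le_succ Set.ordConnected_Iio fun n _ _ hn ↦ ?_
  rw [Order.succ_eq_add_one, Set.mem_Iio] at hn
  show denom a p (n + 1) ≤ denom a p (n + 2)
  rw [denom]
  exact (Nat.le_mul_of_pos_left _ (one_le_partialQuot hap (by omega))).trans
    (Nat.le_add_right _ _)

theorem denom_succ_lt_of_two_le (hap : a < p) {m n : ℕ} (hm : 2 ≤ partialQuot a p m)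
    (hmn : m < n) (hn : n < (cfl a p).length) : denom a p (m + 1) < denom a p (n + 1) := by
  have hq := denom_succ_pos hap (hmn.trans hn)
  calc denom a p (m + 1) < partialQuot a p m * denom a p (m + 1) + denom a p m := by nlinarith
    _ = denom a p (m + 2) := (denom.eq_3 a p m).symm
    _ ≤ denom a p (n + 1) := monotoneOn_denom_succ hap (Set.mem_Iio.2 (by omega)) hn hmn

theorem two_pow_length_le_sq (hap : a < p) : 2 ^ (cfl a p).length ≤ p ^ 2 := by
  rcases h : (cfl a p).length with _ | m
  · exact Nat.one_le_pow _ _ (by omega)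
  have hm : m < (cfl a p).length := by omega
  calc 2 ^ (m + 1) ≤ (2 * Nat.fib (m + 1)) ^ 2 := two_pow_succ_le_sq_two_mul_fib m
    _ ≤ (rem a p m * denom a p (m + 1)) ^ 2 := by
      gcongr
      exacts [two_le_rem hap hm, fib_le_denom hap (m + 1) hm]
    _ ≤ p ^ 2 := by gcongr; exact rem_mul_denom_succ_le a p m

theorem length_le_five_mul_log (hap : a < p) : ((cfl a p).length : ℝ) ≤ 5 * Real.log p := by
  have hpow : ((2 : ℝ) ^ (cfl a p).length) ≤ (p : ℝ) ^ 2 := by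
    exact_mod_cast two_pow_length_le_sq hap
  have hlog := Real.log_le_log (by positivity) hpow
  rw [Real.log_pow, Real.log_pow, Nat.cast_two] at hlog
  have hlog2 := Real.log_two_gt_d9
  have hlen : (0 : ℝ) ≤ (cfl a p).length := Nat.cast_nonneg _
  nlinarith

theorem partialQuot_sub_one_le_fA (hap : a < p) {n : ℕ} (hn : n < (cfl a p).length) :
    partialQuot a p n - 1 ≤ fA p a (denom a p (n + 1)) := by
  rcases le_or_gt (partialQuot a p n) 1 with hb | hb
  · omega
  have hr := rem_succ_pos hn
  have hq := denom_succ_pos hap hn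
  have hbr : partialQuot a p n * rem a p (n + 1) ≤ rem a p n := Nat.div_mul_le_self _ _
  have hrq := rem_mul_denom_succ_le a p n
  have h2r : 2 * rem a p (n + 1) ≤ p := by nlinarith
  rw [fA_eq_of_distNearestInt_eq (by omega) hq hr (distNearestInt_mul_denom_div (by omega) h2r),
    Nat.le_div_iff_mul_le (Nat.mul_pos hq hr)]
  have hsum : (partialQuot a p n - 1) * (denom a p (n + 1) * rem a p (n + 1))
      + denom a p (n + 1) * rem a p (n + 1) ≤ p :=
    calc _ = partialQuot a p n * rem a p (n + 1) * denom a p (n + 1) := by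
          rw [← Nat.succ_mul, Nat.succ_eq_add_one, Nat.sub_add_cancel hb.le]; ring
      _ ≤ rem a p n * denom a p (n + 1) := Nat.mul_le_mul_right _ hbr
      _ ≤ p := hrq
  have := Nat.mul_pos hq hr
  omega

theorem sum_partialQuot_sub_one_le_sum_fA (hap : a < p) :
    ∑ n ∈ Finset.range (cfl a p).length, (partialQuot a p n - 1)
      ≤ ∑ x ∈ Finset.Icc 1 (p - 1), fA p a x := by
  set S := (Finset.range (cfl a p).length).filter (fun n ↦ 2 ≤ partialQuot a p n)
  have hS : ∀ n ∈ S, n < (cfl a p).length :=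
    fun n hn ↦ Finset.mem_range.1 (Finset.mem_filter.1 hn).1
  have hinj : Set.InjOn (fun n ↦ denom a p (n + 1)) S := by
    intro m hm n hn hmn
    by_contra hne
    rcases Nat.lt_or_gt_of_ne hne with hlt | hlt
    · exact (denom_succ_lt_of_two_le hap (Finset.mem_filter.1 hm).2 hlt (hS n hn)).ne hmn
    · exact (denom_succ_lt_of_two_le hap (Finset.mem_filter.1 hn).2 hlt (hS m hm)).ne' hmn
  calc ∑ n ∈ Finset.range (cfl a p).length, (partialQuot a p n - 1)
      = ∑ n ∈ S, (partialQuot a p n - 1) := (Finset.sum_filter_of_ne fun _ _ h ↦ by omega).symm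
    _ ≤ ∑ n ∈ S, fA p a (denom a p (n + 1)) :=
      Finset.sum_le_sum fun n hn ↦ partialQuot_sub_one_le_fA hap (hS n hn)
    _ = ∑ x ∈ S.image (fun n ↦ denom a p (n + 1)), fA p a x := (Finset.sum_image hinj).symm
    _ ≤ ∑ x ∈ Finset.Icc 1 (p - 1), fA p a x :=
      Finset.sum_le_sum_of_subset (Finset.image_subset_iff.2 fun n hn ↦
        denom_succ_mem_Icc hap (hS n hn))

end

end Euclid

open Euclid

theorem sum_fA_ge_general (p : ℕ) (a : ℕ) (hap : a < p) :
    ((cfl a p).sum : ℝ) - 5 * Real.log p ≤ ∑ x ∈ Finset.Icc 1 (p - 1), (fA p a x : ℝ) := by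
  have hsum : (cfl a p).sum ≤ ∑ x ∈ Finset.Icc 1 (p - 1), fA p a x + (cfl a p).length :=
    calc (cfl a p).sum = ∑ n ∈ Finset.range (cfl a p).length, partialQuot a p n := sum_cfl a p
      _ ≤ ∑ n ∈ Finset.range (cfl a p).length, ((partialQuot a p n - 1) + 1) :=
        Finset.sum_le_sum fun _ _ ↦ by omega
      _ = ∑ n ∈ Finset.range (cfl a p).length, (partialQuot a p n - 1) + (cfl a p).length := by
        rw [Finset.sum_add_distrib, Finset.sum_const, Finset.card_range, smul_eq_mul, mul_one]
      _ ≤ _ := Nat.add_le_add_right (sum_partialQuot_sub_one_le_sum_fA hap) _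
  have hsumR : ((cfl a p).sum : ℝ)
      ≤ ∑ x ∈ Finset.Icc 1 (p - 1), (fA p a x : ℝ) + (cfl a p).length := by
    exact_mod_cast hsum
  linarith [length_le_five_mul_log hap]

/-- `∑_{x=1}^{p-1} f_a(x) ≥ (∑_{i=1}^{l(a)} b_i(a)) - 5·log p`. -/
theorem sum_fA_ge (p : ℕ) (hp : p.Prime) (a : ℕ) (ha1 : 1 ≤ a) (hap : a < p) :
    ((cfl a p).sum : ℝ) - 5 * Real.log p ≤ ∑ x ∈ Finset.Icc 1 (p - 1), (fA p a x : ℝ) :=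
  sum_fA_ge_general p a hap
end
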